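/- Suppose Q = {(i,j) : 1 ≤ i,j ≤ ℓ, i ≠ j} is covered by t rectangles S_1×T_1, ..., S_t×T_t with S_k, T_k ⊆ {1,…,ℓ} (necessarily S_k ∩ T_k = ∅ for each k). If 4 ln t ≤ ln ℓ, then Σ_k |S_k| ≥ ℓ ln ℓ / (32 ln t). -/
import Mathlib

open Finset

lemma sum_choose_le' (t w : ℕ) : ∑ j ∈ Finset.range (w+1), t.choose j ≤ (t+1)^w := by
  have h1 : ∀ j ∈ Finset.range (w+1), t.choose j ≤ t ^ j * 1 ^ (w - j) * w.choose j := by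
    intro j hj
    have hj' : j ≤ w := Nat.lt_succ_iff.mp (Finset.mem_range.mp hj)
    have hc : 1 ≤ w.choose j := Nat.choose_pos hj'
    calc t.choose j ≤ t ^ j := Nat.choose_le_pow t j
      _ = t ^ j * 1 ^ (w - j) * 1 := by ring
      _ ≤ t ^ j * 1 ^ (w - j) * w.choose j := Nat.mul_le_mul_left _ hc
  calc ∑ j ∈ Finset.range (w+1), t.choose j
      ≤ ∑ j ∈ Finset.range (w+1), t ^ j * 1 ^ (w - j) * w.choose j :=
        Finset.sum_le_sum h1
    _ = (t+1)^w := (add_pow t 1 w).symm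

set_option maxHeartbeats 1000000 in
theorem stmt12 (ℓ t : ℕ) (S T : Fin t → Finset (Fin ℓ))
    (hcover : ∀ i j : Fin ℓ, i ≠ j → ∃ k, i ∈ S k ∧ j ∈ T k)
    (hdisj : ∀ k, Disjoint (S k) (T k))
    (ht : 4 * Real.log t ≤ Real.log ℓ) :
    (ℓ : ℝ) * Real.log ℓ / (32 * Real.log t) ≤ ∑ k, ((S k).card : ℝ) := by
  -- degenerate case : t ≤ 1
  rcases le_or_gt t 1 with htle | ht2
  · have hlog : Real.log t = 0 := by
      interval_cases t <;> simp
    rw [hlog]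
    simp only [mul_zero, div_zero]
    positivity
  -- main case : t ≥ 2
  have hTl : 0 < Real.log t := by
    have : (2:ℝ) ≤ t := by exact_mod_cast ht2
    exact Real.log_pos (by linarith)
  have hlog2 : Real.log 2 ≤ Real.log t := by
    apply Real.log_le_log (by norm_num)
    exact_mod_cast ht2
  have hL4 : 4 * Real.log 2 ≤ Real.log ℓ := by linarith
  have hlog2pos : (0:ℝ) < Real.log 2 := Real.log_pos (by norm_num)
  have hL : 0 < Real.log ℓ := by linarith
  have hℓpos : 0 < ℓ := by
    by_contra h
    push_neg at h
    interval_cases ℓ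
    simp at hL
  have hℓR : (0:ℝ) < ℓ := by exact_mod_cast hℓpos
  -- the fingerprint map
  set f : Fin ℓ → Finset (Fin t) := fun i => Finset.univ.filter (fun k => i ∈ S k) with hf
  have hinj : Function.Injective f := by
    intro i j hij
    by_contra hne
    obtain ⟨k, hk1, hk2⟩ := hcover i j hne
    have h1 : k ∈ f i := by simp [hf, hk1]
    rw [hij] at h1
    have h2 : j ∈ S k := by simpa [hf] using h1
    exact Finset.disjoint_left.mp (hdisj k) h2 hk2
  -- double counting
  have hdc : ∑ k, (S k).card = ∑ i, (f i).card := by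
    simp only [hf, Finset.card_filter]
    rw [Finset.sum_comm]
    refine Finset.sum_congr rfl fun k _ => ?_
    rw [← Finset.card_filter]
    congr 1
    simp [Finset.filter_mem_eq_inter]
  -- choose the threshold
  set L := Real.log ℓ with hLdef
  set Tl := Real.log t with hTldef
  set w : ℕ := ⌊L / (16 * Tl)⌋₊ with hw
  have hratio_pos : 0 < L / (16 * Tl) := by positivity
  have hwle : (w:ℝ) ≤ L / (16 * Tl) := Nat.floor_le hratio_pos.le
  have hwge : L / (16 * Tl) ≤ (w:ℝ) + 1 := (Nat.lt_floor_add_one _).le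
  clear_value w Tl L
  clear hw
  -- small and big indices
  set A := Finset.univ.filter (fun i : Fin ℓ => (f i).card ≤ w) with hA
  set B := Finset.univ.filter (fun i : Fin ℓ => ¬ (f i).card ≤ w) with hB
  clear_value A B
  have hAB : A.card + B.card = ℓ := by
    rw [hA, hB, Finset.card_filter_add_card_filter_not, Finset.card_univ, Fintype.card_fin]
  -- counting small indices
  have hAcount : A.card ≤ (t+1)^w := by
    have hmaps : ∀ i ∈ A, f i ∈ (Finset.range (w+1)).biUnion
        (fun j => Finset.powersetCard j (Finset.univ : Finset (Fin t))) := by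
      intro i hi
      rw [hA, Finset.mem_filter] at hi
      rw [Finset.mem_biUnion]
      refine ⟨(f i).card, ?_, ?_⟩
      · rw [Finset.mem_range, Nat.lt_succ_iff]
        exact hi.2
      · rw [Finset.mem_powersetCard]
        exact ⟨Finset.subset_univ _, rfl⟩
    calc A.card ≤ ((Finset.range (w+1)).biUnion
          (fun j => Finset.powersetCard j (Finset.univ : Finset (Fin t)))).card :=
        Finset.card_le_card_of_injOn f hmaps (hinj.injOn)
      _ ≤ ∑ j ∈ Finset.range (w+1), (Finset.powersetCard j (Finset.univ : Finset (Fin t))).card :=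
        Finset.card_biUnion_le
      _ = ∑ j ∈ Finset.range (w+1), t.choose j := by
        refine Finset.sum_congr rfl fun j _ => ?_
        rw [Finset.card_powersetCard, Finset.card_univ, Fintype.card_fin]
      _ ≤ (t+1)^w := sum_choose_le' t w
  -- (t+1)^w ≤ ℓ/2
  have hlogt1 : Real.log (t+1) ≤ 2 * Tl := by
    have h1 : ((t:ℝ)+1) ≤ (t:ℝ)^2 := by
      have : (2:ℝ) ≤ t := by exact_mod_cast ht2
      nlinarith
    calc Real.log ((t:ℝ)+1) ≤ Real.log ((t:ℝ)^2) := Real.log_le_log (by positivity) h1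
      _ = 2 * Tl := by rw [Real.log_pow, hTldef]; push_cast; ring
  have hpow : ((t:ℝ)+1)^w ≤ (ℓ:ℝ)/2 := by
    rw [← Real.log_le_log_iff (by positivity) (by positivity), Real.log_pow,
      Real.log_div (by positivity) (by norm_num), ← hLdef]
    have hP : (w:ℝ) * (16 * Tl) ≤ L := by
      rwa [← le_div_iff₀ (by positivity)]
    have h1 : (w:ℝ) * Real.log ((t:ℝ)+1) ≤ (w:ℝ) * (2*Tl) :=
      mul_le_mul_of_nonneg_left hlogt1 (by positivity)
    linarith [h1, hP]
  -- B is large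
  have hBbig : (ℓ:ℝ)/2 ≤ B.card := by
    have h1 : (A.card : ℝ) ≤ (ℓ:ℝ)/2 := by
      calc (A.card:ℝ) ≤ ((t+1)^w : ℕ) := by exact_mod_cast hAcount
        _ = ((t:ℝ)+1)^w := by push_cast; ring
        _ ≤ (ℓ:ℝ)/2 := hpow
    have h2 : (A.card : ℝ) + B.card = ℓ := by exact_mod_cast hAB
    linarith
  -- sum is large
  have hsumB : B.card * (w+1) ≤ ∑ i, (f i).card := by
    calc B.card * (w+1) = B.card • (w+1) := by rw [smul_eq_mul]
      _ ≤ ∑ i ∈ B, (f i).card := by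
        apply Finset.card_nsmul_le_sum
        intro i hi
        rw [hB, Finset.mem_filter] at hi
        have := hi.2
        omega
      _ ≤ ∑ i, (f i).card := Finset.sum_le_sum_of_subset (Finset.subset_univ B)
  have hsumB' : (B.card:ℝ) * ((w:ℝ)+1) ≤ ∑ i, ((f i).card : ℝ) := by
    exact_mod_cast hsumB
  have hdc' : ∑ i, ((f i).card : ℝ) = ∑ k, ((S k).card : ℝ) := by
    exact_mod_cast congrArg (Nat.cast : ℕ → ℝ) hdc.symm
  have hsum : ((ℓ:ℝ)/2) * ((w:ℝ)+1) ≤ ∑ k, ((S k).card : ℝ) := by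
    rw [← hdc']
    refine le_trans ?_ hsumB'
    gcongr
  have hlast : (ℓ:ℝ) * L / (32 * Tl) ≤ ((ℓ:ℝ)/2) * ((w:ℝ)+1) := by
    have : (ℓ:ℝ) * L / (32 * Tl) = ((ℓ:ℝ)/2) * (L/(16*Tl)) := by ring
    rw [this]
    exact mul_le_mul_of_nonneg_left hwge (by positivity)
  linarith
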